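/- arXiv:1311.6389 — 4 statements merged into one kernel-verified Lean document; each statement's English description precedes it below -/
import Mathlib

section
/- The set of processes expressible as a difference of two nonnegative supermartingales is closed under the pointwise minimum operation: if X = X¹ − Y¹ and Y = X² − Y², with X¹, Y¹, X², Y² nonnegative supermartingales, then X ∧ Y is also a difference of two nonnegative supermartingales. -/
/-!
Writing `X = X¹ - Y¹` and `Y = X² - Y²`, subtract the common nonnegative supermartingale
`Y¹ + Y²` from both: `X ∧ Y = (X¹ + Y²) ∧ (X² + Y¹) - (Y¹ + Y²)`, and the minimum of two
supermartingales is again one.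
-/

open MeasureTheory Filter

theorem sub_inf_sub_eq_add_inf_add_sub {α : Type*} [AddCommGroup α] [Lattice α]
    [AddLeftMono α] (a b c d : α) : (a - b) ⊓ (c - d) = (a + d) ⊓ (c + b) - (b + d) := by
  rw [inf_sub]
  congr 1 <;> abel

theorem MeasureTheory.Supermartingale.inf {Ω E ι : Type*} [Preorder ι] {m : MeasurableSpace Ω}
    {μ : Measure Ω} {ℱ : Filtration ι m} [NormedAddCommGroup E] [NormedSpace ℝ E]
    [CompleteSpace E] [Lattice E] [ContinuousSup E] [HasSolidNorm E] [IsOrderedAddMonoid E]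
    [IsOrderedModule ℝ E] {f g : ι → Ω → E} (hf : Supermartingale f ℱ μ) (hg : Supermartingale g ℱ μ) :
    Supermartingale (f ⊓ g) ℱ μ := by
  simpa only [neg_sup, neg_neg] using (hf.neg.sup hg.neg).neg

theorem inf_diff_nonneg_supermartingales_general
    {Ω : Type*} {m : MeasurableSpace Ω} {μ : Measure Ω}
    {ℱ : Filtration ℕ m} {X1 Y1 X2 Y2 : ℕ → Ω → ℝ}
    (hX1 : Supermartingale X1 ℱ μ) (hY1 : Supermartingale Y1 ℱ μ)
    (hX2 : Supermartingale X2 ℱ μ) (hY2 : Supermartingale Y2 ℱ μ)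
    (hX10 : ∀ n, 0 ≤ᵐ[μ] X1 n) (hY10 : ∀ n, 0 ≤ᵐ[μ] Y1 n)
    (hX20 : ∀ n, 0 ≤ᵐ[μ] X2 n) (hY20 : ∀ n, 0 ≤ᵐ[μ] Y2 n) :
    ∃ A B : ℕ → Ω → ℝ, Supermartingale A ℱ μ ∧ Supermartingale B ℱ μ ∧
      (∀ n, 0 ≤ᵐ[μ] A n) ∧ (∀ n, 0 ≤ᵐ[μ] B n) ∧
      (X1 - Y1) ⊓ (X2 - Y2) = A - B := by
  have add_nonneg_ae {f g : Ω → ℝ} (hf : 0 ≤ᵐ[μ] f) (hg : 0 ≤ᵐ[μ] g) : 0 ≤ᵐ[μ] f + g := by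
    simpa only [add_zero] using hf.add_le_add hg
  refine ⟨(X1 + Y2) ⊓ (X2 + Y1), Y1 + Y2, (hX1.add hY2).inf (hX2.add hY1), hY1.add hY2,
    fun n => ?_, fun n => add_nonneg_ae (hY10 n) (hY20 n), sub_inf_sub_eq_add_inf_add_sub ..⟩
  exact (add_nonneg_ae (hX10 n) (hY20 n)).le_inf (add_nonneg_ae (hX20 n) (hY10 n))

/-- Differences of nonnegative supermartingales are closed under pointwise minimum. -/
theorem inf_diff_nonneg_supermartingales
    {Ω : Type*} {m : MeasurableSpace Ω} {μ : Measure Ω} [IsProbabilityMeasure μ]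
    {ℱ : Filtration ℕ m} {X1 Y1 X2 Y2 : ℕ → Ω → ℝ}
    (hX1 : Supermartingale X1 ℱ μ) (hY1 : Supermartingale Y1 ℱ μ)
    (hX2 : Supermartingale X2 ℱ μ) (hY2 : Supermartingale Y2 ℱ μ)
    (hX10 : ∀ n, 0 ≤ᵐ[μ] X1 n) (hY10 : ∀ n, 0 ≤ᵐ[μ] Y1 n)
    (hX20 : ∀ n, 0 ≤ᵐ[μ] X2 n) (hY20 : ∀ n, 0 ≤ᵐ[μ] Y2 n) :
    ∃ A B : ℕ → Ω → ℝ, Supermartingale A ℱ μ ∧ Supermartingale B ℱ μ ∧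
      (∀ n, 0 ≤ᵐ[μ] A n) ∧ (∀ n, 0 ≤ᵐ[μ] B n) ∧
      (X1 - Y1) ⊓ (X2 - Y2) = A - B :=
  inf_diff_nonneg_supermartingales_general hX1 hY1 hX2 hY2 hX10 hY10 hX20 hY20
end

section
/- The set of processes expressible as a difference of two nonnegative supermartingales is closed under addition and under multiplication by arbitrary real scalars, hence forms a vector space; together with closure under pointwise minimum, it is a Riesz space (vector lattice) under the pointwise order. -/
/-! Closure under `⊓` reduces to closure of supermartingales under `⊓`, via
`(A - B) ⊓ (A' - B') = (A + B') ⊓ (A' + B) - (B + B')`; closure under negative scalars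
comes from swapping the two parts of the decomposition. -/

open MeasureTheory Filter

/-- `X` is a quasimartingale, i.e. a difference of two nonnegative supermartingales
(Rao decomposition). -/
def IsQuasimartingale {Ω : Type*} {m : MeasurableSpace Ω}
    (ℱ : MeasureTheory.Filtration ℕ m) (μ : MeasureTheory.Measure Ω)
    (X : ℕ → Ω → ℝ) : Prop :=
  ∃ A B : ℕ → Ω → ℝ, MeasureTheory.Supermartingale A ℱ μ ∧
    MeasureTheory.Supermartingale B ℱ μ ∧
    (∀ n, 0 ≤ᵐ[μ] A n) ∧ (∀ n, 0 ≤ᵐ[μ] B n) ∧ X = A - B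

namespace MeasureTheory.Supermartingale

protected theorem inf_s3 {Ω E ι : Type*} [Preorder ι] {m : MeasurableSpace Ω} {μ : Measure Ω}
    [NormedAddCommGroup E] [NormedSpace ℝ E] [CompleteSpace E] [Lattice E] [ContinuousSup E]
    [HasSolidNorm E] [IsOrderedAddMonoid E] [IsOrderedModule ℝ E]
    {ℱ : Filtration ι m} {f g : ι → Ω → E}
    (hf : Supermartingale f ℱ μ) (hg : Supermartingale g ℱ μ) :
    Supermartingale (f ⊓ g) ℱ μ := by
  simpa only [neg_sup, neg_neg] using (hf.neg.sup hg.neg).neg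

end MeasureTheory.Supermartingale

namespace IsQuasimartingale

variable {Ω : Type*} {m : MeasurableSpace Ω} {μ : Measure Ω} {ℱ : Filtration ℕ m}
  {X Y : ℕ → Ω → ℝ}

theorem neg (hX : IsQuasimartingale ℱ μ X) : IsQuasimartingale ℱ μ (-X) := by
  obtain ⟨A, B, hA, hB, hA0, hB0, rfl⟩ := hX
  exact ⟨B, A, hB, hA, hB0, hA0, neg_sub A B⟩

theorem add (hX : IsQuasimartingale ℱ μ X) (hY : IsQuasimartingale ℱ μ Y) :
    IsQuasimartingale ℱ μ (X + Y) := by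
  obtain ⟨A, B, hA, hB, hA0, hB0, rfl⟩ := hX
  obtain ⟨A', B', hA', hB', hA0', hB0', rfl⟩ := hY
  refine ⟨A + A', B + B', hA.add hA', hB.add hB', fun n => ?_, fun n => ?_,
    (add_sub_add_comm ..).symm⟩
  · filter_upwards [hA0 n, hA0' n] with ω using add_nonneg
  · filter_upwards [hB0 n, hB0' n] with ω using add_nonneg

theorem smul_of_nonneg {c : ℝ} (hc : 0 ≤ c) (hX : IsQuasimartingale ℱ μ X) :
    IsQuasimartingale ℱ μ (c • X) := by
  obtain ⟨A, B, hA, hB, hA0, hB0, rfl⟩ := hX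
  refine ⟨c • A, c • B, hA.smul_nonneg hc, hB.smul_nonneg hc, fun n => ?_, fun n => ?_,
    smul_sub c A B⟩
  · filter_upwards [hA0 n] with ω using smul_nonneg hc
  · filter_upwards [hB0 n] with ω using smul_nonneg hc

theorem smul (c : ℝ) (hX : IsQuasimartingale ℱ μ X) : IsQuasimartingale ℱ μ (c • X) := by
  rcases le_or_gt 0 c with hc | hc
  · exact hX.smul_of_nonneg hc
  · rw [← neg_smul_neg]
    exact hX.neg.smul_of_nonneg (neg_nonneg.mpr hc.le)

theorem inf_s3 (hX : IsQuasimartingale ℱ μ X) (hY : IsQuasimartingale ℱ μ Y) :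
    IsQuasimartingale ℱ μ (X ⊓ Y) := by
  obtain ⟨A, B, hA, hB, hA0, hB0, rfl⟩ := hX
  obtain ⟨A', B', hA', hB', hA0', hB0', rfl⟩ := hY
  refine ⟨(A + B') ⊓ (A' + B), B + B', (hA.add hB').inf_s3 (hA'.add hB), hB.add hB',
    fun n => ?_, fun n => ?_, ?_⟩
  · filter_upwards [hA0 n, hB0 n, hA0' n, hB0' n] with ω h₁ h₂ h₃ h₄
    exact le_inf (add_nonneg h₁ h₄) (add_nonneg h₃ h₂)
  · filter_upwards [hB0 n, hB0' n] with ω using add_nonneg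
  · rw [inf_sub]
    congr 1 <;> abel

end IsQuasimartingale

theorem isQuasimartingale_add_smul_inf_general
    {Ω : Type*} {m : MeasurableSpace Ω} {μ : Measure Ω}
    {ℱ : Filtration ℕ m} {X Y : ℕ → Ω → ℝ}
    (hX : IsQuasimartingale ℱ μ X) (hY : IsQuasimartingale ℱ μ Y) :
    IsQuasimartingale ℱ μ (X + Y) ∧
      (∀ c : ℝ, IsQuasimartingale ℱ μ (c • X)) ∧
      IsQuasimartingale ℱ μ (X ⊓ Y) :=
  ⟨hX.add hY, fun c => hX.smul c, hX.inf_s3 hY⟩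

/-- The quasimartingales (differences of nonnegative supermartingales) form a vector
space closed under pointwise minimum, i.e. a Riesz space under the pointwise order. -/
theorem isQuasimartingale_add_smul_inf
    {Ω : Type*} {m : MeasurableSpace Ω} {μ : Measure Ω} [IsProbabilityMeasure μ]
    {ℱ : Filtration ℕ m} {X Y : ℕ → Ω → ℝ}
    (hX : IsQuasimartingale ℱ μ X) (hY : IsQuasimartingale ℱ μ Y) :
    IsQuasimartingale ℱ μ (X + Y) ∧
      (∀ c : ℝ, IsQuasimartingale ℱ μ (c • X)) ∧
      IsQuasimartingale ℱ μ (X ⊓ Y) :=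
  isQuasimartingale_add_smul_inf_general hX hY
end

section
/- The space of differences of local supermartingales is a Riesz space: if M¹, M² are local supermartingales and N¹, N² are local submartingales, then (M¹ + N¹) ∧ (M² + N²) = ((M¹ − N²) ∧ (M² − N¹)) + (N¹ + N²), which is again a sum of a local supermartingale and a local submartingale. -/
open MeasureTheory Filter

/-- `M` is a local supermartingale: there is an increasing sequence of stopping times
tending to infinity such that each stopped process is a supermartingale. -/
def IsLocalSupermartingale {Ω : Type*} {m : MeasurableSpace Ω}
    (ℱ : MeasureTheory.Filtration ℕ m) (μ : MeasureTheory.Measure Ω)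
    (M : ℕ → Ω → ℝ) : Prop :=
  ∃ T : ℕ → Ω → ℕ,
    (∀ k, MeasureTheory.IsStoppingTime ℱ (fun ω => (T k ω : WithTop ℕ))) ∧
    (∀ k ω, T k ω ≤ T (k + 1) ω) ∧
    (∀ ω, Filter.Tendsto (fun k => T k ω) Filter.atTop Filter.atTop) ∧
    ∀ k, MeasureTheory.Supermartingale (MeasureTheory.stoppedProcess M (fun ω => (T k ω : WithTop ℕ))) ℱ μ

/-- `N` is a local submartingale iff `-N` is a local supermartingale. -/
def IsLocalSubmartingale {Ω : Type*} {m : MeasurableSpace Ω}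
    (ℱ : MeasureTheory.Filtration ℕ m) (μ : MeasureTheory.Measure Ω)
    (N : ℕ → Ω → ℝ) : Prop :=
  IsLocalSupermartingale ℱ μ (-N)

/-- `X` is a difference of two local supermartingales. -/
def IsDiffLocalSupermartingale {Ω : Type*} {m : MeasurableSpace Ω}
    (ℱ : MeasureTheory.Filtration ℕ m) (μ : MeasureTheory.Measure Ω)
    (X : ℕ → Ω → ℝ) : Prop :=
  ∃ A B : ℕ → Ω → ℝ, IsLocalSupermartingale ℱ μ A ∧ IsLocalSupermartingale ℱ μ B ∧
    X = A - B

/-!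
The identity holds in every lattice-ordered group, since addition distributes over `⊓`.
For the decomposition, localizing sequences of two local supermartingales are merged by their
pointwise minimum: stopping at `T k ⊓ S k` is stopping at `T k` and then at `S k`, and a stopped
supermartingale is again a supermartingale. Hence every pointwise operation that preserves
supermartingales, such as `+` and `⊓`, preserves local supermartingales.
-/

theorem add_inf_add_eq_sub_inf_sub_add_add {α : Type*} [Lattice α] [AddCommGroup α]
    [AddLeftMono α] (a b c d : α) :
    (a + b) ⊓ (c + d) = (a - d) ⊓ (c - b) + (b + d) := by
  rw [inf_add]
  congr 1 <;> abel

namespace MeasureTheory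

variable {Ω : Type*} {m : MeasurableSpace Ω} {μ : Measure Ω} {ℱ : Filtration ℕ m}

theorem Supermartingale.stoppedProcess [SigmaFiniteFiltration μ ℱ] {f : ℕ → Ω → ℝ}
    {τ : Ω → WithTop ℕ} (hf : Supermartingale f ℱ μ) (hτ : IsStoppingTime ℱ τ) :
    Supermartingale (stoppedProcess f τ) ℱ μ := by
  simpa only [stoppedProcess_neg, neg_neg] using (hf.neg.stoppedProcess hτ).neg

theorem Supermartingale.inf_s13 {f g : ℕ → Ω → ℝ} (hf : Supermartingale f ℱ μ)
    (hg : Supermartingale g ℱ μ) : Supermartingale (f ⊓ g) ℱ μ := by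
  simpa only [neg_sup, neg_neg] using (hf.neg.sup hg.neg).neg

end MeasureTheory

section Localization

variable {Ω : Type*} {m : MeasurableSpace Ω} {μ : Measure Ω} {ℱ : Filtration ℕ m}

structure IsLocalizingSeq (ℱ : Filtration ℕ m) (T : ℕ → Ω → ℕ) : Prop where
  isStoppingTime : ∀ k, IsStoppingTime ℱ (fun ω => (T k ω : WithTop ℕ))
  mono : ∀ k ω, T k ω ≤ T (k + 1) ω
  tendsto_atTop : ∀ ω, Tendsto (fun k => T k ω) atTop atTop

theorem isLocalSupermartingale_iff {M : ℕ → Ω → ℝ} :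
    IsLocalSupermartingale ℱ μ M ↔ ∃ T, IsLocalizingSeq ℱ T ∧
      ∀ k, Supermartingale (stoppedProcess M (fun ω => (T k ω : WithTop ℕ))) ℱ μ :=
  exists_congr fun _ => ⟨fun ⟨hst, hmono, htend, hsup⟩ => ⟨⟨hst, hmono, htend⟩, hsup⟩,
    fun ⟨⟨hst, hmono, htend⟩, hsup⟩ => ⟨hst, hmono, htend, hsup⟩⟩

theorem IsLocalizingSeq.inf_s13 {T S : ℕ → Ω → ℕ} (hT : IsLocalizingSeq ℱ T)
    (hS : IsLocalizingSeq ℱ S) : IsLocalizingSeq ℱ (T ⊓ S) where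
  isStoppingTime k := (hT.isStoppingTime k).min (hS.isStoppingTime k)
  mono k ω := min_le_min (hT.mono k ω) (hS.mono k ω)
  tendsto_atTop ω := tendsto_inf_atTop atTop (hT.tendsto_atTop ω) (hS.tendsto_atTop ω)

theorem IsLocalSupermartingale.map₂ [SigmaFiniteFiltration μ ℱ] {A B : ℕ → Ω → ℝ}
    (F : ℝ → ℝ → ℝ) (hF : ∀ f g : ℕ → Ω → ℝ, Supermartingale f ℱ μ → Supermartingale g ℱ μ →
      Supermartingale (fun n ω => F (f n ω) (g n ω)) ℱ μ)
    (hA : IsLocalSupermartingale ℱ μ A) (hB : IsLocalSupermartingale ℱ μ B) :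
    IsLocalSupermartingale ℱ μ (fun n ω => F (A n ω) (B n ω)) := by
  obtain ⟨T, hT, hAT⟩ := isLocalSupermartingale_iff.1 hA
  obtain ⟨S, hS, hBS⟩ := isLocalSupermartingale_iff.1 hB
  refine isLocalSupermartingale_iff.2 ⟨T ⊓ S, hT.inf_s13 hS, fun k => ?_⟩
  have hA_stopped : Supermartingale
      (stoppedProcess A (fun ω => min (T k ω : WithTop ℕ) (S k ω))) ℱ μ := by
    simpa only [stoppedProcess_stoppedProcess', min_comm] using
      Supermartingale.stoppedProcess (hAT k) (hS.isStoppingTime k)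
  have hB_stopped : Supermartingale
      (stoppedProcess B (fun ω => min (T k ω : WithTop ℕ) (S k ω))) ℱ μ := by
    simpa only [stoppedProcess_stoppedProcess'] using
      Supermartingale.stoppedProcess (hBS k) (hT.isStoppingTime k)
  exact hF _ _ hA_stopped hB_stopped

theorem IsLocalSupermartingale.add [SigmaFiniteFiltration μ ℱ] {A B : ℕ → Ω → ℝ}
    (hA : IsLocalSupermartingale ℱ μ A) (hB : IsLocalSupermartingale ℱ μ B) :
    IsLocalSupermartingale ℱ μ (A + B) :=
  hA.map₂ (· + ·) (fun _ _ hf hg => hf.add hg) hB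

theorem IsLocalSupermartingale.inf_s13 [SigmaFiniteFiltration μ ℱ] {A B : ℕ → Ω → ℝ}
    (hA : IsLocalSupermartingale ℱ μ A) (hB : IsLocalSupermartingale ℱ μ B) :
    IsLocalSupermartingale ℱ μ (A ⊓ B) :=
  hA.map₂ min (fun _ _ hf hg => hf.inf_s13 hg) hB

theorem IsLocalSubmartingale.add [SigmaFiniteFiltration μ ℱ] {A B : ℕ → Ω → ℝ}
    (hA : IsLocalSubmartingale ℱ μ A) (hB : IsLocalSubmartingale ℱ μ B) :
    IsLocalSubmartingale ℱ μ (A + B) := by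
  rw [IsLocalSubmartingale, neg_add]
  exact IsLocalSupermartingale.add hA hB

end Localization

/-- The lattice identity for sums of local supermartingales and local submartingales,
showing the space of differences of local supermartingales is a Riesz space. -/
theorem inf_add_localSupermartingale_localSubmartingale
    {Ω : Type*} {m : MeasurableSpace Ω} {μ : Measure Ω} [IsProbabilityMeasure μ]
    {ℱ : Filtration ℕ m} {M1 M2 N1 N2 : ℕ → Ω → ℝ}
    (hM1 : IsLocalSupermartingale ℱ μ M1) (hM2 : IsLocalSupermartingale ℱ μ M2)
    (hN1 : IsLocalSubmartingale ℱ μ N1) (hN2 : IsLocalSubmartingale ℱ μ N2) :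
    (M1 + N1) ⊓ (M2 + N2) = ((M1 - N2) ⊓ (M2 - N1)) + (N1 + N2) ∧
      ∃ S T : ℕ → Ω → ℝ, IsLocalSupermartingale ℱ μ S ∧ IsLocalSubmartingale ℱ μ T ∧
        (M1 + N1) ⊓ (M2 + N2) = S + T := by
  have h_inf := add_inf_add_eq_sub_inf_sub_add_add M1 N1 M2 N2
  refine ⟨h_inf, (M1 - N2) ⊓ (M2 - N1), N1 + N2, ?_, hN1.add hN2, h_inf⟩
  rw [sub_eq_add_neg, sub_eq_add_neg]
  exact (hM1.add hN2).inf_s13 (hM2.add hN1)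
end

section
/- The set of nonnegative supermartingales is a wedge that generates the space of quasimartingales but is not a cone of a vector space structure on itself: it is closed under addition and multiplication by nonnegative scalars, and every quasimartingale (process of finite variation Var(X) < ∞ with integrable marginals) equals a difference of two nonnegative supermartingales (Rao decomposition). -/
/-!
Rao's argument. Put `d k = X k - E[X (k+1) | ℱ k]`; telescoping gives
`X n = E[∑_{n ≤ k < n+j} d k + X (n+j) | ℱ n]` for every `j`. Replacing `d` and `X` by their
positive parts makes these conditional expectations increase with `j` (because
`(X k)⁺ ≤ (d k)⁺ + E[(X (k+1))⁺ | ℱ k]`), and their integrals are bounded by the variation of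
`X`, so they converge a.e. to an integrable limit `A n`. Passing from `n` to `n + 1` drops the
nonnegative term `(d n)⁺`, which makes `A` a supermartingale. The negative parts give a second
nonnegative supermartingale, and the difference of the two limits is `X`.
-/

open MeasureTheory Filter

/-- The term of the (quasimartingale) variation of `X` associated with a finite
partition `0 = t₀ < t₁ < ⋯ < t_n`:
`∑_{i<n} E|X_{tᵢ} − E[X_{tᵢ₊₁} | F_{tᵢ}]| + E|X_{t_n}|`. -/
noncomputable def variationTerm {Ω : Type*} {m : MeasurableSpace Ω}
    (ℱ : MeasureTheory.Filtration ℕ m) (μ : MeasureTheory.Measure Ω)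
    (X : ℕ → Ω → ℝ) {n : ℕ} (t : Fin (n + 1) → ℕ) : ℝ :=
  (∑ i : Fin n,
      ∫ ω, |X (t i.castSucc) ω - (μ[X (t i.succ) | ℱ (t i.castSucc)]) ω| ∂μ) +
    ∫ ω, |X (t (Fin.last n)) ω| ∂μ

open Topology Finset
open scoped ENNReal

theorem integrable_iSup_and_ae_tendsto_of_monotone {α : Type*} [MeasurableSpace α]
    {μ : Measure α} {f : ℕ → α → ℝ} {C : ℝ} (hf : ∀ n, Integrable (f n) μ)
    (hf_nonneg : ∀ n, 0 ≤ᵐ[μ] f n) (hf_mono : ∀ᵐ x ∂μ, Monotone (f · x))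
    (hf_bound : ∀ n, ∫ x, f n x ∂μ ≤ C) :
    Integrable (fun x ↦ ⨆ n, f n x) μ ∧
      ∀ᵐ x ∂μ, Tendsto (f · x) atTop (𝓝 (⨆ n, f n x)) := by
  set g : ℕ → α → ℝ≥0∞ := fun n x ↦ ENNReal.ofReal (f n x)
  have hg_meas : AEMeasurable (fun x ↦ ⨆ n, g n x) μ :=
    AEMeasurable.iSup fun n ↦ (hf n).aemeasurable.ennreal_ofReal
  have hg_lintegral : ∫⁻ x, ⨆ n, g n x ∂μ ≠ ∞ := by
    refine ne_top_of_le_ne_top ENNReal.ofReal_ne_top (b := ENNReal.ofReal C) ?_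
    rw [lintegral_iSup' (fun n ↦ (hf n).aemeasurable.ennreal_ofReal)
      (by filter_upwards [hf_mono] with x hx using fun i j hij ↦ ENNReal.ofReal_le_ofReal (hx hij))]
    refine iSup_le fun n ↦ ?_
    rw [← ofReal_integral_eq_lintegral_ofReal (hf n) (hf_nonneg n)]
    exact ENNReal.ofReal_le_ofReal (hf_bound n)
  -- where the supremum is infinite both sides are `0`
  have h_eq : (fun x ↦ (⨆ n, g n x).toReal) =ᵐ[μ] fun x ↦ ⨆ n, f n x := by
    filter_upwards [ae_all_iff.2 hf_nonneg] with x hx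
    rw [ENNReal.toReal_iSup fun n ↦ ENNReal.ofReal_ne_top]
    exact iSup_congr fun n ↦ ENNReal.toReal_ofReal (hx n)
  refine ⟨(integrable_toReal_of_lintegral_ne_top hg_meas hg_lintegral).congr h_eq, ?_⟩
  filter_upwards [hf_mono, ae_lt_top' hg_meas hg_lintegral, ae_all_iff.2 hf_nonneg]
    with x hx_mono hx_fin hx_nonneg
  refine tendsto_atTop_ciSup hx_mono ⟨(⨆ n, g n x).toReal, Set.forall_mem_range.2 fun n ↦ ?_⟩
  rw [← ENNReal.toReal_ofReal (hx_nonneg n)]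
  exact ENNReal.toReal_mono hx_fin.ne (le_iSup (g · x) n)

theorem condExp_add_condExp_of_le {Ω : Type*} {m₁ m₂ m₀ : MeasurableSpace Ω} {μ : Measure Ω}
    (hm₁₂ : m₁ ≤ m₂) (hm₂ : m₂ ≤ m₀) [SigmaFinite (μ.trim hm₂)] {f g : Ω → ℝ}
    (hf : Integrable f μ) (hg : Integrable g μ) :
    μ[f + μ[g | m₂] | m₁] =ᵐ[μ] μ[f + g | m₁] := by
  filter_upwards [condExp_add hf (integrable_condExp (m := m₂) (f := g)) m₁,
    condExp_add hf hg m₁, condExp_condExp_of_le (f := g) hm₁₂ hm₂] with ω h₁ h₂ h₃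
  rw [h₁, h₂, Pi.add_apply, Pi.add_apply, h₃]

theorem MeasureTheory.Supermartingale.congr_ae {Ω ι : Type*} {m : MeasurableSpace Ω} [Preorder ι]
    {ℱ : Filtration ι m} {μ : Measure Ω} {f g : ι → Ω → ℝ} (hf : Supermartingale f ℱ μ)
    (hg : StronglyAdapted ℱ g) (hfg : ∀ i, f i =ᵐ[μ] g i) : Supermartingale g ℱ μ :=
  ⟨hg, fun i j hij ↦ (condExp_congr_ae (hfg j)).symm.trans_le ((hf.2.1 i j hij).trans_eq (hfg i)),
    fun i ↦ (hf.integrable i).congr (hfg i)⟩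

theorem posPart_condExp_le {Ω : Type*} {m m₀ : MeasurableSpace Ω} {μ : Measure Ω} {f : Ω → ℝ}
    (hf : Integrable f μ) : (μ[f | m])⁺ ≤ᵐ[μ] μ[f⁺ | m] := by
  filter_upwards [condExp_mono hf hf.pos_part (Eventually.of_forall fun ω ↦ le_posPart (f ω)),
    condExp_nonneg (m := m) (Eventually.of_forall fun ω ↦ posPart_nonneg (f ω))] with ω h h₀
  exact sup_le h h₀

theorem negPart_condExp_le {Ω : Type*} {m m₀ : MeasurableSpace Ω} {μ : Measure Ω} {f : Ω → ℝ}
    (hf : Integrable f μ) : (μ[f | m])⁻ ≤ᵐ[μ] μ[f⁻ | m] := by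
  filter_upwards [condExp_neg f m, posPart_condExp_le (m := m) hf.neg] with ω h_neg h
  simpa [← posPart_neg, h_neg] using h

section RaoSum

variable {Ω : Type*} (φ ψ : ℕ → Ω → ℝ)

def raoSum (n j : ℕ) : Ω → ℝ := ∑ k ∈ Ico n (n + j), φ k + ψ (n + j)

theorem raoSum_zero_right (n : ℕ) : raoSum φ ψ n 0 = ψ n := by
  simp [raoSum]

theorem raoSum_succ_right (n j : ℕ) :
    raoSum φ ψ n (j + 1) = raoSum φ ψ n j + (φ (n + j) + ψ (n + j + 1) - ψ (n + j)) := by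
  rw [raoSum, raoSum, ← add_assoc, sum_Ico_succ_top (Nat.le_add_right n j)]
  abel

theorem raoSum_succ_left (n j : ℕ) : raoSum φ ψ n (j + 1) = φ n + raoSum φ ψ (n + 1) j := by
  rw [raoSum, raoSum, sum_eq_sum_Ico_succ_bot (by omega), add_assoc, Nat.add_right_comm n 1 j]
  rfl

theorem raoSum_sub (φ' ψ' : ℕ → Ω → ℝ) (n j : ℕ) :
    raoSum φ ψ n j - raoSum φ' ψ' n j = raoSum (φ - φ') (ψ - ψ') n j := by
  simp only [raoSum, Pi.sub_apply, sum_sub_distrib]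
  abel

variable {φ ψ}

theorem raoSum_nonneg (hφ : 0 ≤ φ) (hψ : 0 ≤ ψ) (n j : ℕ) : 0 ≤ raoSum φ ψ n j :=
  add_nonneg (sum_nonneg fun k _ ↦ hφ k) (hψ _)

theorem raoSum_mono {φ' ψ' : ℕ → Ω → ℝ} (hφ : φ ≤ φ') (hψ : ψ ≤ ψ') (n j : ℕ) :
    raoSum φ ψ n j ≤ raoSum φ' ψ' n j :=
  add_le_add (sum_le_sum fun k _ ↦ hφ k) (hψ _)

theorem raoSum_le_raoSum_zero (hφ : 0 ≤ φ) (n j : ℕ) : raoSum φ ψ n j ≤ raoSum φ ψ 0 (n + j) := by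
  refine add_le_add (sum_le_sum_of_subset_of_nonneg ?_ fun k _ _ ↦ hφ k) (by rw [zero_add])
  intro k
  simp

theorem raoSum_succ_left_le (hφ : 0 ≤ φ) (n j : ℕ) :
    raoSum φ ψ (n + 1) j ≤ raoSum φ ψ n (j + 1) := by
  rw [raoSum_succ_left]
  exact le_add_of_nonneg_left (hφ n)

variable [MeasurableSpace Ω] {μ : Measure Ω}

theorem integrable_raoSum (hφ : ∀ k, Integrable (φ k) μ) (hψ : ∀ k, Integrable (ψ k) μ) (n j : ℕ) :
    Integrable (raoSum φ ψ n j) μ :=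
  (integrable_finsetSum' _ fun k _ ↦ hφ k).add (hψ _)

end RaoSum

section RaoLimit

variable {Ω : Type*} {m : MeasurableSpace Ω} {ℱ : Filtration ℕ m} {μ : Measure Ω}
  {φ ψ : ℕ → Ω → ℝ}

-- The properties of `(φ, ψ) = (d⁺, X⁺)` and `(d⁻, X⁻)` that Rao's construction uses.
structure IsRaoPair (ℱ : Filtration ℕ m) (μ : Measure Ω) (φ ψ : ℕ → Ω → ℝ) : Prop where
  integrable_left : ∀ k, Integrable (φ k) μ
  integrable_right : ∀ k, Integrable (ψ k) μ
  nonneg_left : 0 ≤ φ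
  nonneg_right : 0 ≤ ψ
  le_add_condExp : ∀ k, ψ k ≤ᵐ[μ] φ k + μ[ψ (k + 1) | ℱ k]
  bdd_integral_raoSum : ∃ C, ∀ n j, ∫ ω, raoSum φ ψ n j ω ∂μ ≤ C

-- The real `⨆` is `0` where the sequence is unbounded, which happens only on a null set.
variable (ℱ μ φ ψ) in
noncomputable def raoLimit (n : ℕ) : Ω → ℝ := fun ω ↦ ⨆ j, μ[raoSum φ ψ n j | ℱ n] ω

theorem condExp_raoSum_succ_right [IsFiniteMeasure μ] (hφ : ∀ k, Integrable (φ k) μ)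
    (hψ : ∀ k, Integrable (ψ k) μ) (n j : ℕ) :
    μ[raoSum φ ψ n (j + 1) | ℱ n] =ᵐ[μ]
      μ[raoSum φ ψ n j + (φ (n + j) + μ[ψ (n + j + 1) | ℱ (n + j)] - ψ (n + j)) | ℱ n] := by
  set f := raoSum φ ψ n j + φ (n + j) - ψ (n + j) with hf_def
  have hf : Integrable f μ := ((integrable_raoSum hφ hψ n j).add (hφ _)).sub (hψ _)
  have h_succ : raoSum φ ψ n (j + 1) = f + ψ (n + j + 1) := by
    rw [raoSum_succ_right, hf_def]
    abel
  have h_cond : raoSum φ ψ n j + (φ (n + j) + μ[ψ (n + j + 1) | ℱ (n + j)] - ψ (n + j)) =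
      f + μ[ψ (n + j + 1) | ℱ (n + j)] := by
    rw [hf_def]
    abel
  rw [h_succ, h_cond]
  exact (condExp_add_condExp_of_le (ℱ.mono (Nat.le_add_right n j)) (ℱ.le _) hf (hψ _)).symm

namespace IsRaoPair

theorem integrable_raoSum (h : IsRaoPair ℱ μ φ ψ) (n j : ℕ) : Integrable (raoSum φ ψ n j) μ :=
  _root_.integrable_raoSum h.integrable_left h.integrable_right n j

theorem condExp_raoSum_nonneg (h : IsRaoPair ℱ μ φ ψ) (n j : ℕ) :
    0 ≤ᵐ[μ] μ[raoSum φ ψ n j | ℱ n] :=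
  condExp_nonneg (Eventually.of_forall (raoSum_nonneg h.nonneg_left h.nonneg_right n j))

theorem raoLimit_nonneg (h : IsRaoPair ℱ μ φ ψ) (n : ℕ) : 0 ≤ᵐ[μ] raoLimit ℱ μ φ ψ n := by
  filter_upwards [ae_all_iff.2 (h.condExp_raoSum_nonneg n)] with ω hω
  exact Real.iSup_nonneg hω

variable [IsFiniteMeasure μ]

theorem condExp_raoSum_le_succ (h : IsRaoPair ℱ μ φ ψ) (n j : ℕ) :
    μ[raoSum φ ψ n j | ℱ n] ≤ᵐ[μ] μ[raoSum φ ψ n (j + 1) | ℱ n] := by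
  have h_le : raoSum φ ψ n j ≤ᵐ[μ]
      raoSum φ ψ n j + (φ (n + j) + μ[ψ (n + j + 1) | ℱ (n + j)] - ψ (n + j)) := by
    filter_upwards [h.le_add_condExp (n + j)] with ω hω
    simp only [Pi.add_apply, Pi.sub_apply] at hω ⊢
    linarith
  refine (condExp_mono (h.integrable_raoSum n j) ?_ h_le).trans_eq
    (condExp_raoSum_succ_right h.integrable_left h.integrable_right n j).symm
  exact (h.integrable_raoSum n j).add
    (((h.integrable_left _).add integrable_condExp).sub (h.integrable_right _))

theorem ae_monotone_condExp_raoSum (h : IsRaoPair ℱ μ φ ψ) (n : ℕ) :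
    ∀ᵐ ω ∂μ, Monotone fun j ↦ μ[raoSum φ ψ n j | ℱ n] ω := by
  filter_upwards [ae_all_iff.2 (h.condExp_raoSum_le_succ n)] with ω hω
  exact monotone_nat_of_le_succ hω

theorem integrable_raoLimit_and_ae_tendsto (h : IsRaoPair ℱ μ φ ψ) (n : ℕ) :
    Integrable (raoLimit ℱ μ φ ψ n) μ ∧
      ∀ᵐ ω ∂μ, Tendsto (fun j ↦ μ[raoSum φ ψ n j | ℱ n] ω) atTop (𝓝 (raoLimit ℱ μ φ ψ n ω)) := by
  obtain ⟨C, hC⟩ := h.bdd_integral_raoSum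
  refine integrable_iSup_and_ae_tendsto_of_monotone (C := C) (fun _ ↦ integrable_condExp)
    (h.condExp_raoSum_nonneg n) (h.ae_monotone_condExp_raoSum n) fun j ↦ ?_
  rw [integral_condExp (ℱ.le n)]
  exact hC n j

theorem condExp_raoSum_le_raoLimit (h : IsRaoPair ℱ μ φ ψ) (n : ℕ) :
    ∀ᵐ ω ∂μ, ∀ j, μ[raoSum φ ψ n j | ℱ n] ω ≤ raoLimit ℱ μ φ ψ n ω := by
  filter_upwards [h.ae_monotone_condExp_raoSum n, (h.integrable_raoLimit_and_ae_tendsto n).2]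
    with ω h_mono h_tendsto
  exact h_mono.ge_of_tendsto h_tendsto

theorem setIntegral_raoLimit_succ_le (h : IsRaoPair ℱ μ φ ψ) (n : ℕ) {s : Set Ω}
    (hs : MeasurableSet[ℱ n] s) :
    ∫ ω in s, raoLimit ℱ μ φ ψ (n + 1) ω ∂μ ≤ ∫ ω in s, raoLimit ℱ μ φ ψ n ω ∂μ := by
  obtain ⟨h_int, h_tendsto⟩ := h.integrable_raoLimit_and_ae_tendsto (n + 1)
  have h_lim := integral_tendsto_of_tendsto_of_monotone (μ := μ.restrict s)
    (fun j ↦ integrable_condExp.integrableOn) h_int.integrableOn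
    (ae_restrict_of_ae (h.ae_monotone_condExp_raoSum (n + 1))) (ae_restrict_of_ae h_tendsto)
  refine le_of_tendsto' h_lim fun j ↦ ?_
  calc ∫ ω in s, μ[raoSum φ ψ (n + 1) j | ℱ (n + 1)] ω ∂μ
      = ∫ ω in s, raoSum φ ψ (n + 1) j ω ∂μ :=
        setIntegral_condExp (ℱ.le _) (h.integrable_raoSum _ _) (ℱ.mono n.le_succ s hs)
    _ ≤ ∫ ω in s, raoSum φ ψ n (j + 1) ω ∂μ :=
        setIntegral_mono (h.integrable_raoSum _ _).integrableOn
          (h.integrable_raoSum _ _).integrableOn (raoSum_succ_left_le h.nonneg_left n j)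
    _ = ∫ ω in s, μ[raoSum φ ψ n (j + 1) | ℱ n] ω ∂μ :=
        (setIntegral_condExp (ℱ.le _) (h.integrable_raoSum _ _) hs).symm
    _ ≤ ∫ ω in s, raoLimit ℱ μ φ ψ n ω ∂μ :=
        setIntegral_mono_ae integrable_condExp.integrableOn
          (h.integrable_raoLimit_and_ae_tendsto n).1.integrableOn
          (by filter_upwards [h.condExp_raoSum_le_raoLimit n] with ω hω using hω (j + 1))

theorem supermartingale_raoLimit (h : IsRaoPair ℱ μ φ ψ) :
    Supermartingale (raoLimit ℱ μ φ ψ) ℱ μ :=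
  supermartingale_of_setIntegral_succ_le
    (fun _ ↦ (Measurable.iSup fun _ ↦ stronglyMeasurable_condExp.measurable).stronglyMeasurable)
    (fun n ↦ (h.integrable_raoLimit_and_ae_tendsto n).1)
    fun n _ hs ↦ h.setIntegral_raoLimit_succ_le n hs

end IsRaoPair

end RaoLimit

section Quasimartingale

variable {Ω : Type*} {m : MeasurableSpace Ω} {ℱ : Filtration ℕ m} {μ : Measure Ω}
  {X : ℕ → Ω → ℝ}

variable (ℱ μ X) in
noncomputable def condDecrement (k : ℕ) : Ω → ℝ := X k - μ[X (k + 1) | ℱ k]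

theorem integrable_condDecrement (hX : ∀ n, Integrable (X n) μ) (k : ℕ) :
    Integrable (condDecrement ℱ μ X k) μ :=
  (hX k).sub integrable_condExp

theorem posPart_le_condDecrement_add (hX : ∀ n, Integrable (X n) μ) (k : ℕ) :
    (X k)⁺ ≤ᵐ[μ] (condDecrement ℱ μ X k)⁺ + μ[(X (k + 1))⁺ | ℱ k] := by
  filter_upwards [posPart_condExp_le (m := ℱ k) (hX (k + 1))] with ω h
  have h_split : X k ω = condDecrement ℱ μ X k ω + μ[X (k + 1) | ℱ k] ω := by
    simp [condDecrement]
  simp only [Pi.add_apply, Pi.posPart_apply] at h ⊢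
  rw [h_split]
  refine le_trans (sup_le (add_le_add (le_posPart _) (le_posPart _))
    (add_nonneg (posPart_nonneg _) (posPart_nonneg _))) (add_le_add_right h _)

theorem negPart_le_condDecrement_add (hX : ∀ n, Integrable (X n) μ) (k : ℕ) :
    (X k)⁻ ≤ᵐ[μ] (condDecrement ℱ μ X k)⁻ + μ[(X (k + 1))⁻ | ℱ k] := by
  filter_upwards [negPart_condExp_le (m := ℱ k) (hX (k + 1))] with ω h
  have h_split : X k ω = condDecrement ℱ μ X k ω + μ[X (k + 1) | ℱ k] ω := by
    simp [condDecrement]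
  simp only [Pi.add_apply, Pi.negPart_apply] at h ⊢
  rw [h_split]
  refine le_trans (sup_le ?_ (add_nonneg (negPart_nonneg _) (negPart_nonneg _)))
    (add_le_add_right h _)
  rw [neg_add]
  exact add_le_add (neg_le_negPart _) (neg_le_negPart _)

theorem variationTerm_val_eq_integral_raoSum (hX : ∀ n, Integrable (X n) μ) (N : ℕ) :
    variationTerm ℱ μ X (fun i : Fin (N + 1) ↦ (i : ℕ)) =
      ∫ ω, raoSum |condDecrement ℱ μ X| |X| 0 N ω ∂μ := by
  have hd : ∀ k, Integrable (|condDecrement ℱ μ X| k) μ :=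
    fun k ↦ (integrable_condDecrement hX k).abs
  have hX_abs : Integrable (|X| N) μ := (hX N).abs
  simp only [raoSum, zero_add, ← range_eq_Ico, Pi.add_apply, Finset.sum_apply]
  rw [integral_add (integrable_finsetSum _ fun k _ ↦ hd k) hX_abs,
    integral_finsetSum _ fun k _ ↦ hd k, ← Fin.sum_univ_eq_sum_range]
  rfl

theorem integral_raoSum_le_variationTerm {φ ψ : ℕ → Ω → ℝ} (hX : ∀ n, Integrable (X n) μ)
    (hφ : ∀ k, Integrable (φ k) μ) (hψ : ∀ k, Integrable (ψ k) μ)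
    (hφ_le : φ ≤ |condDecrement ℱ μ X|) (hψ_le : ψ ≤ |X|) (n j : ℕ) :
    ∫ ω, raoSum φ ψ n j ω ∂μ ≤ variationTerm ℱ μ X (fun i : Fin (n + j + 1) ↦ (i : ℕ)) := by
  rw [variationTerm_val_eq_integral_raoSum hX]
  refine integral_mono (integrable_raoSum hφ hψ n j)
    (integrable_raoSum (fun k ↦ (integrable_condDecrement hX k).abs) (fun k ↦ (hX k).abs) 0 _) ?_
  exact (raoSum_mono hφ_le hψ_le n j).trans (raoSum_le_raoSum_zero (fun k ↦ abs_nonneg _) n j)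

theorem isRaoPair_posPart {C : ℝ} (hX : ∀ n, Integrable (X n) μ)
    (hC : ∀ N, variationTerm ℱ μ X (fun i : Fin (N + 1) ↦ (i : ℕ)) ≤ C) :
    IsRaoPair ℱ μ (condDecrement ℱ μ X)⁺ X⁺ where
  integrable_left k := (integrable_condDecrement hX k).pos_part
  integrable_right k := (hX k).pos_part
  nonneg_left := posPart_nonneg _
  nonneg_right := posPart_nonneg _
  le_add_condExp := posPart_le_condDecrement_add hX
  bdd_integral_raoSum := ⟨C, fun n j ↦ (integral_raoSum_le_variationTerm hX
    (fun k ↦ (integrable_condDecrement hX k).pos_part) (fun k ↦ (hX k).pos_part)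
    (fun _ _ ↦ sup_le (le_abs_self _) (abs_nonneg _))
    (fun _ _ ↦ sup_le (le_abs_self _) (abs_nonneg _)) n j).trans (hC _)⟩

theorem isRaoPair_negPart {C : ℝ} (hX : ∀ n, Integrable (X n) μ)
    (hC : ∀ N, variationTerm ℱ μ X (fun i : Fin (N + 1) ↦ (i : ℕ)) ≤ C) :
    IsRaoPair ℱ μ (condDecrement ℱ μ X)⁻ X⁻ where
  integrable_left k := (integrable_condDecrement hX k).neg_part
  integrable_right k := (hX k).neg_part
  nonneg_left := negPart_nonneg _
  nonneg_right := negPart_nonneg _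
  le_add_condExp := negPart_le_condDecrement_add hX
  bdd_integral_raoSum := ⟨C, fun n j ↦ (integral_raoSum_le_variationTerm hX
    (fun k ↦ (integrable_condDecrement hX k).neg_part) (fun k ↦ (hX k).neg_part)
    (fun _ _ ↦ sup_le (neg_le_abs _) (abs_nonneg _))
    (fun _ _ ↦ sup_le (neg_le_abs _) (abs_nonneg _)) n j).trans (hC _)⟩

variable [IsFiniteMeasure μ]

theorem condExp_raoSum_condDecrement_eq (hadp : Adapted ℱ X) (hX : ∀ n, Integrable (X n) μ)
    (n j : ℕ) : μ[raoSum (condDecrement ℱ μ X) X n j | ℱ n] =ᵐ[μ] X n := by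
  induction j with
  | zero =>
    rw [raoSum_zero_right,
      condExp_of_stronglyMeasurable (ℱ.le n) (hadp n).stronglyMeasurable (hX n)]
  | succ j ih =>
    refine (condExp_raoSum_succ_right (integrable_condDecrement hX) hX n j).trans ?_
    have h_zero : condDecrement ℱ μ X (n + j) + μ[X (n + j + 1) | ℱ (n + j)] - X (n + j) = 0 := by
      simp [condDecrement]
    rwa [h_zero, add_zero]

theorem ae_eq_raoLimit_posPart_sub_raoLimit_negPart {C : ℝ} (hadp : Adapted ℱ X)
    (hX : ∀ n, Integrable (X n) μ)
    (hC : ∀ N, variationTerm ℱ μ X (fun i : Fin (N + 1) ↦ (i : ℕ)) ≤ C) (n : ℕ) :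
    X n =ᵐ[μ] raoLimit ℱ μ (condDecrement ℱ μ X)⁺ X⁺ n -
      raoLimit ℱ μ (condDecrement ℱ μ X)⁻ X⁻ n := by
  have hpos := isRaoPair_posPart hX hC
  have hneg := isRaoPair_negPart hX hC
  have h_diff : ∀ j, μ[raoSum (condDecrement ℱ μ X)⁺ X⁺ n j | ℱ n] -
      μ[raoSum (condDecrement ℱ μ X)⁻ X⁻ n j | ℱ n] =ᵐ[μ] X n := fun j ↦ by
    refine (condExp_sub (hpos.integrable_raoSum n j) (hneg.integrable_raoSum n j) _).symm.trans ?_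
    rw [raoSum_sub, posPart_sub_negPart, posPart_sub_negPart]
    exact condExp_raoSum_condDecrement_eq hadp hX n j
  filter_upwards [ae_all_iff.2 h_diff, (hpos.integrable_raoLimit_and_ae_tendsto n).2,
    (hneg.integrable_raoLimit_and_ae_tendsto n).2] with ω h_eq h_pos h_neg
  exact tendsto_nhds_unique (tendsto_const_nhds.congr fun j ↦ (h_eq j).symm) (h_pos.sub h_neg)

theorem exists_nonneg_supermartingale_sub_eq {C : ℝ} (hadp : Adapted ℱ X)
    (hX : ∀ n, Integrable (X n) μ)
    (hC : ∀ N, variationTerm ℱ μ X (fun i : Fin (N + 1) ↦ (i : ℕ)) ≤ C) :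
    ∃ A B : ℕ → Ω → ℝ, Supermartingale A ℱ μ ∧ Supermartingale B ℱ μ ∧
      (∀ n, 0 ≤ᵐ[μ] A n) ∧ (∀ n, 0 ≤ᵐ[μ] B n) ∧ X = A - B := by
  have hpos := isRaoPair_posPart hX hC
  have hneg := isRaoPair_negPart hX hC
  have h_eq : ∀ n, raoLimit ℱ μ (condDecrement ℱ μ X)⁻ X⁻ n =ᵐ[μ]
      (raoLimit ℱ μ (condDecrement ℱ μ X)⁺ X⁺ - X) n := fun n ↦ by
    filter_upwards [ae_eq_raoLimit_posPart_sub_raoLimit_negPart hadp hX hC n] with ω h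
    simp [h]
  exact ⟨_, _, hpos.supermartingale_raoLimit,
    hneg.supermartingale_raoLimit.congr_ae
      (hpos.supermartingale_raoLimit.1.sub hadp.stronglyAdapted) h_eq,
    hpos.raoLimit_nonneg, fun n ↦ (hneg.raoLimit_nonneg n).trans_eq (h_eq n),
    (sub_sub_cancel _ _).symm⟩

end Quasimartingale

/-- The nonnegative supermartingales form a wedge (closed under addition and
multiplication by nonnegative scalars) which generates the quasimartingales: every
adapted process with integrable marginals and finite variation is a difference of two
nonnegative supermartingales (Rao decomposition). -/
theorem nonneg_supermartingales_wedge_and_rao_decomposition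
    {Ω : Type*} {m : MeasurableSpace Ω} {μ : Measure Ω} [IsProbabilityMeasure μ]
    (ℱ : Filtration ℕ m) :
    (∀ A B : ℕ → Ω → ℝ, Supermartingale A ℱ μ → Supermartingale B ℱ μ →
      (∀ n, 0 ≤ᵐ[μ] A n) → (∀ n, 0 ≤ᵐ[μ] B n) →
      Supermartingale (A + B) ℱ μ ∧ ∀ n, 0 ≤ᵐ[μ] (A + B) n) ∧
    (∀ (c : ℝ), 0 ≤ c → ∀ A : ℕ → Ω → ℝ, Supermartingale A ℱ μ →
      (∀ n, 0 ≤ᵐ[μ] A n) →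
      Supermartingale (c • A) ℱ μ ∧ ∀ n, 0 ≤ᵐ[μ] (c • A) n) ∧
    (∀ X : ℕ → Ω → ℝ, Adapted ℱ X → (∀ n, Integrable (X n) μ) →
      (∃ C : ℝ, ∀ (n : ℕ) (t : Fin (n + 1) → ℕ), StrictMono t → t 0 = 0 →
        variationTerm ℱ μ X t ≤ C) →
      ∃ A B : ℕ → Ω → ℝ, Supermartingale A ℱ μ ∧ Supermartingale B ℱ μ ∧
        (∀ n, 0 ≤ᵐ[μ] A n) ∧ (∀ n, 0 ≤ᵐ[μ] B n) ∧ X = A - B) := by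
  refine ⟨fun A B hA hB hA₀ hB₀ ↦ ⟨hA.add hB, fun n ↦ ?_⟩,
    fun c hc A hA hA₀ ↦ ⟨hA.smul_nonneg hc, fun n ↦ ?_⟩, fun X hadp hX ⟨C, hC⟩ ↦ ?_⟩
  · filter_upwards [hA₀ n, hB₀ n] with ω h₁ h₂ using add_nonneg h₁ h₂
  · filter_upwards [hA₀ n] with ω h using mul_nonneg hc h
  · exact exists_nonneg_supermartingale_sub_eq hadp hX fun N ↦ hC N _ (fun _ _ h ↦ h) rfl
end
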